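/- For any symmetric positive definite N×N matrix M, the function J(v) = 2 Tr((D_v^{1/2} M D_v^{1/2})^{1/2}) - Σᵢ vᵢ is strictly concave on the positive orthant ℝ₊₊^N. -/

import Mathlib

open Matrix Real Filter

noncomputable def msqrt {N : ℕ} (A : Matrix (Fin N) (Fin N) ℝ) : Matrix (Fin N) (Fin N) ℝ :=
  letI := Classical.dec A.PosSemidef
  if h : A.PosSemidef then
    (h.1.eigenvectorUnitary : Matrix (Fin N) (Fin N) ℝ) *
      Matrix.diagonal ((↑) ∘ Real.sqrt ∘ h.1.eigenvalues) *
      (star h.1.eigenvectorUnitary : Matrix (Fin N) (Fin N) ℝ)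
  else 0

noncomputable def dhalf {N : ℕ} (v : Fin N → ℝ) : Matrix (Fin N) (Fin N) ℝ :=
  Matrix.diagonal fun i => Real.sqrt (v i)

variable {N : ℕ}

open scoped MatrixOrder

lemma msqrt_eq {A : Matrix (Fin N) (Fin N) ℝ} (h : A.PosSemidef) :
    msqrt A = CFC.sqrt A := by
  unfold msqrt
  rw [dif_pos h, CFC.sqrt_eq_cfc, cfc_nnreal_eq_real _ A h.nonneg, h.1.cfc_eq]
  simp only [IsHermitian.cfc, Unitary.conjStarAlgAut_apply]
  congr 3
  funext i
  simp only [Function.comp_apply, RCLike.ofReal_real_eq_id, id_eq, Real.coe_sqrt,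
    Real.coe_toNNReal _ (h.eigenvalues_nonneg i)]

lemma msqrt_posSemidef {A : Matrix (Fin N) (Fin N) ℝ} (h : A.PosSemidef) :
    (msqrt A).PosSemidef := by rw [msqrt_eq h]; exact (CFC.sqrt_nonneg A).posSemidef

lemma msqrt_mul_self {A : Matrix (Fin N) (Fin N) ℝ} (h : A.PosSemidef) :
    msqrt A * msqrt A = A := by rw [msqrt_eq h]; exact CFC.sqrt_mul_sqrt_self A h.nonneg

lemma msqrt_posDef {A : Matrix (Fin N) (Fin N) ℝ} (h : A.PosDef) :
    (msqrt A).PosDef := by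
  have hps := msqrt_posSemidef h.posSemidef
  refine PosDef.of_dotProduct_mulVec_pos hps.1 fun x hx => ?_
  rcases lt_or_eq_of_le (hps.dotProduct_mulVec_nonneg x) with hlt | heq
  · exact hlt
  · exfalso
    have h0 : msqrt A *ᵥ x = 0 := (hps.dotProduct_mulVec_zero_iff x).mp heq.symm
    have hAx : A *ᵥ x = 0 := by
      rw [← msqrt_mul_self h.posSemidef, ← mulVec_mulVec, h0, mulVec_zero]
    have := h.dotProduct_mulVec_pos hx
    rw [hAx, dotProduct_zero] at this
    exact lt_irrefl 0 this

lemma trace_psd_nonneg {A : Matrix (Fin N) (Fin N) ℝ} (h : A.PosSemidef) :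
    0 ≤ A.trace := by
  have hrw : A = (msqrt A)ᵀ * msqrt A := by
    rw [← conjTranspose_eq_transpose_of_trivial, (msqrt_posSemidef h).1, msqrt_mul_self h]
  rw [hrw, Matrix.trace]
  refine Finset.sum_nonneg fun j _ => ?_
  rw [Matrix.diag_apply, Matrix.mul_apply]
  exact Finset.sum_nonneg fun i _ => by
    simp only [transpose_apply]; exact mul_self_nonneg _

lemma psd_eq_zero_of_trace {A : Matrix (Fin N) (Fin N) ℝ} (h : A.PosSemidef)
    (h0 : A.trace = 0) : A = 0 := by
  have hrw : A = (msqrt A)ᵀ * msqrt A := by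
    rw [← conjTranspose_eq_transpose_of_trivial, (msqrt_posSemidef h).1, msqrt_mul_self h]
  suffices hs : msqrt A = 0 by rw [hrw, hs, transpose_zero, Matrix.zero_mul]
  rw [hrw, Matrix.trace] at h0
  ext i j
  have hdiag : ∀ j' ∈ Finset.univ, (0:ℝ) ≤ ((msqrt A)ᵀ * msqrt A).diag j' :=
    fun j' _ => by
      rw [Matrix.diag_apply, Matrix.mul_apply]
      exact Finset.sum_nonneg fun i _ => by
        simp only [transpose_apply]; exact mul_self_nonneg _
  have hj := (Finset.sum_eq_zero_iff_of_nonneg hdiag).mp h0 j (Finset.mem_univ j)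
  rw [Matrix.diag_apply, Matrix.mul_apply] at hj
  have hij := (Finset.sum_eq_zero_iff_of_nonneg (fun i _ => by
      simp only [transpose_apply]; exact mul_self_nonneg ((msqrt A) i j))).mp hj i
      (Finset.mem_univ i)
  simp only [transpose_apply] at hij
  simpa using mul_self_eq_zero.mp hij

lemma psd_conj {A : Matrix (Fin N) (Fin N) ℝ} (hA : A.PosSemidef)
    (B : Matrix (Fin N) (Fin N) ℝ) : (B * A * Bᵀ).PosSemidef := by
  have := hA.mul_mul_conjTranspose_same B
  rwa [conjTranspose_eq_transpose_of_trivial] at this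

lemma posDef_conj {A B : Matrix (Fin N) (Fin N) ℝ} (hA : A.PosDef) (hB : IsUnit B.det) :
    (B * A * Bᵀ).PosDef := by
  have hrw : B * A * Bᵀ = (Bᵀ)ᴴ * A * Bᵀ := by
    rw [conjTranspose_eq_transpose_of_trivial, transpose_transpose]
  rw [hrw]
  refine PosDef.of_dotProduct_mulVec_pos (isHermitian_conjTranspose_mul_mul _ hA.1) fun x hx => ?_
  have hx' : Bᵀ *ᵥ x ≠ 0 := by
    intro h0
    apply hx
    have hBT : IsUnit (Bᵀ).det := by rwa [det_transpose]
    have : (Bᵀ)⁻¹ *ᵥ (Bᵀ *ᵥ x) = x := by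
      rw [mulVec_mulVec, nonsing_inv_mul _ hBT, one_mulVec]
    rw [h0, mulVec_zero] at this
    exact this.symm
  simpa only [star_mulVec, dotProduct_mulVec, vecMul_vecMul] using hA.dotProduct_mulVec_pos hx'

lemma transpose_sub_herm {R S : Matrix (Fin N) (Fin N) ℝ} (hR : R.IsHermitian)
    (hS : S.IsHermitian) : (R - S)ᵀ = R - S := by
  rw [transpose_sub, ← conjTranspose_eq_transpose_of_trivial R,
    ← conjTranspose_eq_transpose_of_trivial S, hR, hS]

lemma key_identity {X S : Matrix (Fin N) (Fin N) ℝ} (hX : X.PosSemidef) (hS : S.PosDef) :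
    (X * S⁻¹).trace + S.trace - 2 * (msqrt X).trace
      = ((msqrt X - S) * S⁻¹ * (msqrt X - S)).trace := by
  have hSdet : IsUnit S.det := isUnit_iff_ne_zero.mpr (ne_of_gt hS.det_pos)
  have h1 : (msqrt X - S) * S⁻¹ * (msqrt X - S)
      = msqrt X * S⁻¹ * msqrt X - msqrt X - msqrt X + S := by
    rw [Matrix.sub_mul, mul_nonsing_inv _ hSdet, Matrix.mul_sub, Matrix.sub_mul,
      Matrix.sub_mul, nonsing_inv_mul_cancel_right _ _ hSdet]
    simp only [Matrix.one_mul]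
    abel
  rw [h1, trace_add, trace_sub, trace_sub]
  have h2 : (msqrt X * S⁻¹ * msqrt X).trace = (X * S⁻¹).trace := by
    rw [trace_mul_cycle, msqrt_mul_self hX]
  rw [h2]; ring

lemma two_trace_msqrt_le {X S : Matrix (Fin N) (Fin N) ℝ} (hX : X.PosSemidef)
    (hS : S.PosDef) : 2 * (msqrt X).trace ≤ (X * S⁻¹).trace + S.trace := by
  have hB : (msqrt X - S)ᵀ = msqrt X - S :=
    transpose_sub_herm (msqrt_posSemidef hX).1 hS.1
  have hE : ((msqrt X - S) * S⁻¹ * (msqrt X - S)).PosSemidef := by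
    have := psd_conj hS.inv.posSemidef (msqrt X - S)
    rwa [hB] at this
  have := trace_psd_nonneg hE
  linarith [key_identity hX hS]

lemma two_trace_msqrt_lt {X S : Matrix (Fin N) (Fin N) ℝ} (hX : X.PosSemidef)
    (hS : S.PosDef) (hne : S ≠ msqrt X) :
    2 * (msqrt X).trace < (X * S⁻¹).trace + S.trace := by
  set R := msqrt X with hRdef
  set B := R - S with hBdef
  have hB : Bᵀ = B := transpose_sub_herm (msqrt_posSemidef hX).1 hS.1
  have hE : (B * S⁻¹ * B).PosSemidef := by
    have := psd_conj hS.inv.posSemidef B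
    rwa [hB] at this
  rcases lt_or_eq_of_le (trace_psd_nonneg hE) with hlt | heq
  · linarith [key_identity hX hS]
  · exfalso
    have hE0 : B * S⁻¹ * B = 0 := psd_eq_zero_of_trace hE heq.symm
    set T := msqrt S⁻¹ with hTdef
    have hTps : S⁻¹.PosSemidef := hS.inv.posSemidef
    have hTpd : T.PosDef := msqrt_posDef hS.inv
    have hTdet : IsUnit T.det := isUnit_iff_ne_zero.mpr (ne_of_gt hTpd.det_pos)
    have hTsym : Tᵀ = T := by
      rw [← conjTranspose_eq_transpose_of_trivial]; exact (msqrt_posSemidef hTps).1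
    have hfac : (B * T) * (B * T)ᴴ = B * S⁻¹ * B := by
      rw [conjTranspose_eq_transpose_of_trivial, transpose_mul, hTsym, hB,
        Matrix.mul_assoc, ← Matrix.mul_assoc T T B, msqrt_mul_self hTps,
        ← Matrix.mul_assoc]
    have hBT : B * T = 0 := by
      rw [← Matrix.self_mul_conjTranspose_eq_zero (A := B * T), hfac, hE0]
    have hB0 : B = 0 := by
      have := mul_nonsing_inv_cancel_right T B hTdet
      rw [hBT, Matrix.zero_mul] at this
      exact this.symm
    exact hne (sub_eq_zero.mp hB0).symm

lemma two_trace_msqrt_eq {X : Matrix (Fin N) (Fin N) ℝ} (hX : X.PosDef) :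
    (X * (msqrt X)⁻¹).trace + (msqrt X).trace = 2 * (msqrt X).trace := by
  have hRdet : IsUnit (msqrt X).det :=
    isUnit_iff_ne_zero.mpr (ne_of_gt (msqrt_posDef hX).det_pos)
  have h1 : X * (msqrt X)⁻¹ = msqrt X := by
    have h2 := mul_nonsing_inv_cancel_right (msqrt X) (msqrt X) hRdet
    rwa [msqrt_mul_self hX.posSemidef] at h2
  rw [h1]; ring

lemma trace_msqrt_comm {A : Matrix (Fin N) (Fin N) ℝ} (hA : IsUnit A.det) :
    (msqrt (A * Aᵀ)).trace = (msqrt (Aᵀ * A)).trace := by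
  have hAT : IsUnit (Aᵀ).det := by rwa [det_transpose]
  have hAtA : (Aᵀ * A).PosDef := by
    have := posDef_conj (Matrix.PosDef.one (n := Fin N) (R := ℝ)) hAT
    rwa [Matrix.mul_one, transpose_transpose] at this
  have hP : (msqrt (Aᵀ * A)).PosDef := msqrt_posDef hAtA
  have hPdet : IsUnit (msqrt (Aᵀ * A)).det := isUnit_iff_ne_zero.mpr (ne_of_gt hP.det_pos)
  have hPP : msqrt (Aᵀ * A) * msqrt (Aᵀ * A) = Aᵀ * A := msqrt_mul_self hAtA.posSemidef
  set P := msqrt (Aᵀ * A)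
  have hQ : (A * P⁻¹ * Aᵀ).PosSemidef := psd_conj hP.inv.posSemidef A
  have hAAt : (A * Aᵀ).PosSemidef := by
    have := psd_conj (Matrix.PosSemidef.one (n := Fin N) (R := ℝ)) A
    rwa [Matrix.mul_one] at this
  have hsq : (A * P⁻¹ * Aᵀ) ^ 2 = A * Aᵀ := by
    rw [pow_two]
    have e1 : A * P⁻¹ * Aᵀ * (A * P⁻¹ * Aᵀ) = A * (P⁻¹ * (Aᵀ * A) * P⁻¹) * Aᵀ := by
      simp only [Matrix.mul_assoc]
    rw [e1, ← hPP]
    have e2 : P⁻¹ * (P * P) * P⁻¹ = 1 := by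
      rw [← Matrix.mul_assoc, nonsing_inv_mul _ hPdet, Matrix.one_mul,
        mul_nonsing_inv _ hPdet]
    rw [e2, Matrix.mul_one]
  have hmsq : msqrt (A * Aᵀ) = A * P⁻¹ * Aᵀ := by
    rw [msqrt_eq hAAt]
    exact (CFC.sqrt_eq_iff _ _ hAAt.nonneg hQ.nonneg).mpr (by rw [← pow_two]; exact hsq)
  rw [hmsq]
  rw [trace_mul_cycle, ← hPP, mul_nonsing_inv_cancel_right _ _ hPdet]

theorem stmt_5 {N : ℕ} (M : Matrix (Fin N) (Fin N) ℝ) (hM : M.PosDef) :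
    StrictConcaveOn ℝ {v : Fin N → ℝ | ∀ i, 0 < v i}
      (fun v => 2 * (msqrt (dhalf v * M * dhalf v)).trace - ∑ i, v i) := by
  classical
  have hMps := hM.posSemidef
  have hCpd : (msqrt M).PosDef := msqrt_posDef hM
  have hCsym : (msqrt M)ᵀ = msqrt M := by
    rw [← conjTranspose_eq_transpose_of_trivial]; exact (msqrt_posSemidef hMps).1
  have hCC : msqrt M * msqrt M = M := msqrt_mul_self hMps
  have hCdet : IsUnit (msqrt M).det := isUnit_iff_ne_zero.mpr (ne_of_gt hCpd.det_pos)
  set C := msqrt M with hCdef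
  -- trace rewrite
  have key : ∀ v : Fin N → ℝ, (∀ i, 0 < v i) →
      (msqrt (dhalf v * M * dhalf v)).trace = (msqrt (C * diagonal v * C)).trace := by
    intro v hv
    have hDsym : (dhalf v)ᵀ = dhalf v := diagonal_transpose _
    have hDD : dhalf v * dhalf v = diagonal v := by
      rw [dhalf, diagonal_mul_diagonal]
      exact congrArg diagonal (funext fun i => Real.mul_self_sqrt (hv i).le)
    have hDdet : IsUnit (dhalf v).det := by
      rw [dhalf, det_diagonal]
      exact isUnit_iff_ne_zero.mpr (Finset.prod_ne_zero_iff.mpr fun i _ =>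
          ne_of_gt (Real.sqrt_pos.mpr (hv i)))
    have hAdet : IsUnit (dhalf v * C).det := by
      rw [det_mul]; exact hDdet.mul hCdet
    have h1 : dhalf v * C * (dhalf v * C)ᵀ = dhalf v * M * dhalf v := by
      rw [transpose_mul, hCsym, hDsym, ← hCC]
      simp only [Matrix.mul_assoc]
    have h2 : (dhalf v * C)ᵀ * (dhalf v * C) = C * diagonal v * C := by
      rw [transpose_mul, hCsym, hDsym, ← hDD]
      simp only [Matrix.mul_assoc]
    have h3 := trace_msqrt_comm hAdet
    rwa [h1, h2] at h3
  have hLpd : ∀ v : Fin N → ℝ, (∀ i, 0 < v i) → (C * diagonal v * C).PosDef := by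
    intro v hv
    have := posDef_conj (Matrix.PosDef.diagonal hv) hCdet
    rwa [hCsym] at this
  constructor
  · -- convexity of the set
    intro x hx y hy a b ha hb hab
    intro i
    simp only [Set.mem_setOf_eq] at hx hy
    simp only [Pi.add_apply, Pi.smul_apply, smul_eq_mul]
    rcases eq_or_lt_of_le ha with h | h
    · have hb1 : b = 1 := by linarith
      simp [← h, hb1]; exact hy i
    · have : 0 ≤ b * y i := mul_nonneg hb (hy i).le
      have := mul_pos h (hx i)
      linarith
  · intro x hx y hy hxy a b ha hb hab
    simp only [Set.mem_setOf_eq] at hx hy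
    have hmpos : ∀ i, 0 < (a • x + b • y) i := fun i => by
      simp only [Pi.add_apply, Pi.smul_apply, smul_eq_mul]
      exact add_pos (mul_pos ha (hx i)) (mul_pos hb (hy i))
    simp only [smul_eq_mul]
    rw [key x hx, key y hy, key _ hmpos]
    have hLm : C * diagonal (a • x + b • y) * C
        = a • (C * diagonal x * C) + b • (C * diagonal y * C) := by
      have hdiag : diagonal (a • x + b • y) = a • diagonal x + b • diagonal y := by
        ext i j
        rcases eq_or_ne i j with rfl | hij
        · simp [Matrix.diagonal_apply_eq]
        · simp [Matrix.diagonal_apply_ne _ hij]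
      rw [hdiag, Matrix.mul_add, Matrix.add_mul, mul_smul_comm, mul_smul_comm,
        smul_mul_assoc, smul_mul_assoc]
    set Lx := C * diagonal x * C with hLxdef
    set Ly := C * diagonal y * C with hLydef
    set Lm := C * diagonal (a • x + b • y) * C with hLmdef
    have hLmpd : Lm.PosDef := hLpd _ hmpos
    have hLxpd : Lx.PosDef := hLpd _ hx
    have hLypd : Ly.PosDef := hLpd _ hy
    set S := msqrt Lm with hSdef
    have hSpd : S.PosDef := msqrt_posDef hLmpd
    have hmid : 2 * (msqrt Lm).trace
        = a * ((Lx * S⁻¹).trace + S.trace) + b * ((Ly * S⁻¹).trace + S.trace) := by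
      have e1 := two_trace_msqrt_eq hLmpd
      have e2 : (Lm * S⁻¹).trace = a * (Lx * S⁻¹).trace + b * (Ly * S⁻¹).trace := by
        rw [hLm, Matrix.add_mul, Matrix.smul_mul, Matrix.smul_mul, trace_add, trace_smul,
          trace_smul, smul_eq_mul, smul_eq_mul]
      have e3 : a * S.trace + b * S.trace = S.trace := by
        rw [← add_mul, hab, one_mul]
      rw [← e1, e2]
      linarith
    have hne : S ≠ msqrt Lx ∨ S ≠ msqrt Ly := by
      by_contra hcon
      push_neg at hcon
      obtain ⟨h1, h2⟩ := hcon
      have hLL : Lx = Ly := by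
        rw [← msqrt_mul_self hLxpd.posSemidef, ← msqrt_mul_self hLypd.posSemidef, ← h1, ← h2]
      have hD : diagonal x = diagonal y := by
        have e := congrArg (fun Z => C⁻¹ * Z * C⁻¹) hLL
        simp only [hLxdef, hLydef] at e
        have cancel : ∀ D : Matrix (Fin N) (Fin N) ℝ, C⁻¹ * (C * D * C) * C⁻¹ = D := by
          intro D
          rw [Matrix.mul_assoc C D C, ← Matrix.mul_assoc C⁻¹ C (D * C),
            nonsing_inv_mul _ hCdet, Matrix.one_mul,
            mul_nonsing_inv_cancel_right _ _ hCdet]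
        rwa [cancel, cancel] at e
      exact hxy (diagonal_injective hD)
    have hxle := two_trace_msqrt_le hLxpd.posSemidef hSpd
    have hyle := two_trace_msqrt_le hLypd.posSemidef hSpd
    have hsum : ∑ i, (a • x + b • y) i = a * ∑ i, x i + b * ∑ i, y i := by
      simp only [Pi.add_apply, Pi.smul_apply, smul_eq_mul]
      rw [Finset.sum_add_distrib, Finset.mul_sum, Finset.mul_sum]
    rcases hne with h | h
    · have hxlt := two_trace_msqrt_lt hLxpd.posSemidef hSpd h
      have := mul_lt_mul_of_pos_left hxlt ha
      have := mul_le_mul_of_nonneg_left hyle hb.le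
      rw [hsum]
      linarith
    · have hylt := two_trace_msqrt_lt hLypd.posSemidef hSpd h
      have := mul_lt_mul_of_pos_left hylt hb
      have := mul_le_mul_of_nonneg_left hxle ha.le
      rw [hsum]
      linarith
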